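/- arXiv:2204.05763 — 3 statements merged into one kernel-verified Lean document; each statement's English description precedes it below -/
import Mathlib

section
/- If φ/(2π) is rational and cos φ is rational, then cos φ ∈ {0, 1/2, -1/2, 1, -1} (Niven's theorem). -/
open Real

namespace NivenPort

/-- Niven's theorem: if φ/(2π) is rational and cos φ is rational, then
cos φ ∈ {0, 1/2, -1/2, 1, -1}. -/
theorem niven (φ : ℝ) (h1 : ∃ q : ℚ, φ / (2 * π) = (q : ℝ))
    (h2 : ∃ q : ℚ, Real.cos φ = (q : ℝ)) :
    Real.cos φ ∈ ({0, 1/2, -1/2, 1, -1} : Set ℝ) := by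
  obtain ⟨q, hq⟩ := h1
  have hφ : φ = ((2 * q : ℚ) : ℝ) * π := by
    rw [div_eq_iff (by positivity)] at hq
    rw [hq]; push_cast; ring
  have h := _root_.niven ⟨2 * q, hφ⟩ h2
  simp only [Set.mem_insert_iff, Set.mem_singleton_iff] at h ⊢
  tauto

end NivenPort
end

section
/- Impossible Triangle Corollary: Let p > 12 be prime, and let a, b, c, γ be reals with 0 < a, b, c < π, γ = 2πn/p for an integer 0 < n < p, sin a ≠ 0, sin b ≠ 0, satisfying the spherical cosine rule cos c = cos a·cos b + sin a·sin b·cos γ. If cos a ∈ ℚ and cos b ∈ ℚ, then cos c ∉ ℚ. -/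
open Real

/-- `2 * cos (2*π*m/p)` is integral over ℤ. -/
lemma two_cos_integral (p : ℕ) (hp : 0 < p) (m : ℤ) :
    IsIntegral ℤ ((2 * Real.cos (2 * π * (m : ℝ) / (p : ℝ)) : ℝ) : ℂ) := by
  set θ : ℝ := 2 * π * (m : ℝ) / (p : ℝ) with hθ
  set ζ : ℂ := Complex.exp (θ * Complex.I) with hζdef
  have hζp : ζ ^ p = 1 := by
    rw [hζdef, ← Complex.exp_nat_mul]
    have : (p : ℂ) * ((θ : ℂ) * Complex.I) = (m : ℂ) * (2 * π * Complex.I) := by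
      have hp' : (p : ℂ) ≠ 0 := by exact_mod_cast Nat.cast_ne_zero.2 hp.ne'
      rw [hθ]
      push_cast
      field_simp
    rw [this, Complex.exp_int_mul_two_pi_mul_I]
  have hζ : IsIntegral ℤ ζ := by
    refine ⟨Polynomial.X ^ p - Polynomial.C 1, Polynomial.monic_X_pow_sub_C 1 hp.ne', ?_⟩
    simp [hζp]
  have hkey : Complex.exp (-(θ : ℂ) * Complex.I) = ζ ^ (p - 1) := by
    have hζ0 : ζ ≠ 0 := Complex.exp_ne_zero _
    have h2 : ζ ^ (p - 1) * ζ = 1 := by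
      rw [← pow_succ, Nat.sub_add_cancel hp]; exact hζp
    have h1 : Complex.exp (-(θ : ℂ) * Complex.I) * ζ = 1 := by
      rw [hζdef, ← Complex.exp_add,
        show -(θ : ℂ) * Complex.I + (θ : ℂ) * Complex.I = 0 by ring, Complex.exp_zero]
    exact mul_right_cancel₀ hζ0 (h1.trans h2.symm)
  have hζinv : IsIntegral ℤ (Complex.exp (-(θ : ℂ) * Complex.I)) := by
    rw [hkey]; exact hζ.pow _
  have hsum : ((2 * Real.cos θ : ℝ) : ℂ) = ζ + Complex.exp (-(θ : ℂ) * Complex.I) := by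
    push_cast
    rw [Complex.cos, hζdef]
    ring
  rw [hsum]
  exact hζ.add hζinv

/-- A rational number integral over ℤ is an integer. -/
lemma rat_integral_int (q : ℚ) (h : IsIntegral ℤ ((q : ℝ) : ℂ)) : ∃ k : ℤ, q = k := by
  have hmap : ((q : ℝ) : ℂ) = algebraMap ℚ ℂ q := by norm_num
  rw [hmap] at h
  have h' : IsIntegral ℤ q :=
    (isIntegral_algebraMap_iff ((algebraMap ℚ ℂ).injective)).1 h
  obtain ⟨k, hk⟩ := IsIntegrallyClosed.isIntegral_iff.1 h'
  exact ⟨k, by exact_mod_cast hk.symm⟩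

/-- Impossible Triangle Corollary: for a non-degenerate spherical triangle with sides
a, b, c ∈ (0, π), included angle γ = 2πn/p (p > 12 prime, 0 < n < p), satisfying the
spherical cosine rule, if cos a and cos b are rational then cos c is irrational. -/
theorem impossible_triangle (p : ℕ) (hp : p.Prime) (hp12 : 12 < p)
    (a b c γ : ℝ) (ha : 0 < a ∧ a < π) (hb : 0 < b ∧ b < π) (hc : 0 < c ∧ c < π)
    (n : ℤ) (hn0 : 0 < n) (hnp : n < (p : ℤ)) (hγ : γ = 2 * π * (n : ℝ) / (p : ℝ))
    (hsa : Real.sin a ≠ 0) (hsb : Real.sin b ≠ 0)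
    (hrule : Real.cos c = Real.cos a * Real.cos b + Real.sin a * Real.sin b * Real.cos γ)
    (hqa : ∃ q : ℚ, Real.cos a = (q : ℝ)) (hqb : ∃ q : ℚ, Real.cos b = (q : ℝ)) :
    ¬ ∃ q : ℚ, Real.cos c = (q : ℝ) := by
  rintro ⟨qc, hqc⟩
  obtain ⟨qa, hqa⟩ := hqa
  obtain ⟨qb, hqb⟩ := hqb
  -- sin²a, sin²b as rationals
  have hsa2 : Real.sin a ^ 2 = ((1 - qa ^ 2 : ℚ) : ℝ) := by
    push_cast; rw [← hqa]; nlinarith [Real.sin_sq_add_cos_sq a]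
  have hsb2 : Real.sin b ^ 2 = ((1 - qb ^ 2 : ℚ) : ℝ) := by
    push_cast; rw [← hqb]; nlinarith [Real.sin_sq_add_cos_sq b]
  have ha0 : (1 - qa ^ 2 : ℚ) ≠ 0 := by
    intro h
    apply hsa
    have := hsa2; rw [h] at this
    simpa [pow_eq_zero_iff] using this
  have hb0 : (1 - qb ^ 2 : ℚ) ≠ 0 := by
    intro h
    apply hsb
    have := hsb2; rw [h] at this
    simpa [pow_eq_zero_iff] using this
  have hane : ((1 - qa ^ 2 : ℚ) : ℝ) ≠ 0 := by exact_mod_cast ha0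
  have hbne : ((1 - qb ^ 2 : ℚ) : ℝ) ≠ 0 := by exact_mod_cast hb0
  -- cos² γ is rational
  set s : ℚ := (qc - qa * qb) ^ 2 / ((1 - qa ^ 2) * (1 - qb ^ 2)) with hs
  have hcos2 : Real.cos γ ^ 2 = (s : ℝ) := by
    have h1 : Real.sin a * Real.sin b * Real.cos γ = ((qc - qa * qb : ℚ) : ℝ) := by
      push_cast; rw [← hqc, ← hqa, ← hqb]; linarith [hrule]
    have h2 : ((1 - qa ^ 2 : ℚ) : ℝ) * ((1 - qb ^ 2 : ℚ) : ℝ) * Real.cos γ ^ 2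
        = ((qc - qa * qb : ℚ) : ℝ) ^ 2 := by
      rw [← hsa2, ← hsb2, ← h1]; ring
    have hsR : (s : ℝ) = ((qc - qa * qb : ℚ) : ℝ) ^ 2
        / (((1 - qa ^ 2 : ℚ) : ℝ) * ((1 - qb ^ 2 : ℚ) : ℝ)) := by
      rw [hs]; push_cast; ring
    rw [hsR, eq_div_iff (mul_ne_zero hane hbne)]
    linear_combination h2
  -- cos (2γ) is rational; 2γ = 2π(2n)/p
  set t : ℚ := 2 * s - 1 with ht
  have hcos2γ : Real.cos (2 * γ) = (t : ℝ) := by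
    rw [Real.cos_two_mul, hcos2, ht]; push_cast; ring
  have h2γ : 2 * γ = 2 * π * ((2 * n : ℤ) : ℝ) / (p : ℝ) := by
    rw [hγ]; push_cast; ring
  -- 2t is an algebraic integer, hence an integer
  have hint : IsIntegral ℤ (((2 * t : ℚ) : ℝ) : ℂ) := by
    have h := two_cos_integral p hp.pos (2 * n)
    rw [← h2γ, hcos2γ] at h
    convert h using 2
    push_cast; ring
  obtain ⟨k, hk⟩ := rat_integral_int _ hint
  -- |k| ≤ 2
  have hbound : |Real.cos (2 * γ)| ≤ 1 := Real.abs_cos_le_one _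
  have htk : (t : ℝ) = (k : ℝ) / 2 := by
    have h1 : (2 * t : ℚ) = (k : ℚ) := by exact_mod_cast hk
    have h2 : (t : ℚ) = (k : ℚ) / 2 := by linarith
    exact_mod_cast congrArg (Rat.cast : ℚ → ℝ) h2
  have hkb : -2 ≤ k ∧ k ≤ 2 := by
    rw [hcos2γ, htk, abs_le] at hbound
    constructor <;> [exact_mod_cast (by linarith [hbound.1] : (-2 : ℝ) ≤ (k : ℝ));
      exact_mod_cast (by linarith [hbound.2] : (k : ℝ) ≤ 2)]
  have hcosθ : Real.cos (2 * γ) = (k : ℝ) / 2 := by rw [hcos2γ, htk]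
  -- in every case cos (24 γ) = 1
  have h24 : Real.cos (24 * γ) = 1 := by
    have e1 : (24 : ℝ) * γ = 2 * (3 * (2 * (2 * γ))) := by ring
    have e2 : Real.cos (2 * (2 * γ)) = 2 * Real.cos (2 * γ) ^ 2 - 1 :=
      Real.cos_two_mul _
    rw [e1, Real.cos_two_mul, Real.cos_three_mul, e2, hcosθ]
    obtain ⟨hk1, hk2⟩ := hkb
    interval_cases k <;> norm_num
  -- hence 24γ is a multiple of 2π, so p ∣ 24 n : contradiction
  obtain ⟨j, hj⟩ := (Real.cos_eq_one_iff _).1 h24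
  rw [hγ] at hj
  have hpne : (p : ℝ) ≠ 0 := by
    exact_mod_cast Nat.cast_ne_zero.2 hp.pos.ne'
  have h2 : (j : ℝ) * (2 * π) * (p : ℝ) = 24 * (2 * π * (n : ℝ)) := by
    rw [hj]; field_simp
  have h3 : ((j : ℝ) * (p : ℝ) - 24 * (n : ℝ)) * (2 * π) = 0 := by
    linear_combination h2
  have hjp : (j : ℝ) * (p : ℝ) = 24 * (n : ℝ) := by
    rcases mul_eq_zero.1 h3 with h | h
    · linarith
    · exact absurd h (by positivity)
  have hjp' : j * (p : ℤ) = 24 * n := by exact_mod_cast hjp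
  have hdvd : (p : ℤ) ∣ 24 * n := ⟨j, by linarith [hjp']⟩
  have hpZ : Prime (p : ℤ) := Nat.prime_iff_prime_int.1 hp
  rcases hpZ.dvd_mul.1 hdvd with h | h
  · have hn24 : p ∣ 24 := by exact_mod_cast h
    have hle' : p ≤ 24 := Nat.le_of_dvd (by norm_num) hn24
    interval_cases p <;> first | omega | norm_num at hp
  · have : (p : ℤ) ≤ n := Int.le_of_dvd hn0 h
    omega
end

section
/- Complementarity: let p > 12 be prime. Suppose points p, p_z, p_x on the unit sphere with angular distances θ = d(p, p_z), θ′ = d(p, p_x), c = d(p_z, p_x), all in (0, π), with cos c ∈ ℚ, and the angle at the vertex p (or the included angle in the cosine rule) equal to 2πn/p with 0 < n < p. If cos θ ∈ ℚ then cos θ′ ∉ ℚ. -/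
open Real Polynomial

lemma aux_irrat (p : ℕ) (hp : p.Prime) (hp4 : 4 < p) (m : ℕ) (hm : ¬ p ∣ m) (q : ℚ)
    (hq : Real.cos (2 * π * m / p) = q) : False := by
  have hp0 : p ≠ 0 := hp.pos.ne'
  have hco : m.Coprime p := (Nat.Coprime.symm (hp.coprime_iff_not_dvd.mpr hm))
  set ζ : ℂ := Complex.exp (2 * π * Complex.I * (m / p)) with hζ
  have hprim : IsPrimitiveRoot ζ p := Complex.isPrimitiveRoot_exp_of_coprime m p hp0 hco
  set x : ℝ := 2 * π * m / p with hx
  have hζx : ζ = Complex.exp (x * Complex.I) := by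
    rw [hζ, hx]; congr 1; push_cast; ring
  have hcos : Complex.cos x = (q : ℂ) := by
    rw [← Complex.ofReal_cos, hq]; norm_num
  have hann : ζ ^ 2 - 2 * (q : ℂ) * ζ + 1 = 0 := by
    have h2 : 2 * Complex.cos x = Complex.exp (x * Complex.I) + Complex.exp (-x * Complex.I) := by
      rw [Complex.cos]; ring_nf
    have hmul : Complex.exp (x * Complex.I) * Complex.exp (-x * Complex.I) = 1 := by
      rw [← Complex.exp_add]; ring_nf; exact Complex.exp_zero
    have : ζ * (2 * Complex.cos x) = ζ ^ 2 + 1 := by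
      rw [h2, hζx]; linear_combination hmul
    rw [hcos] at this; linear_combination -this
  set P : ℚ[X] := C 1 * X ^ 2 + C (-(2*q)) * X + C 1 with hP
  have haeval : aeval ζ P = 0 := by
    simp [hP]; linear_combination hann
  have hPdeg : P.degree = 2 := Polynomial.degree_quadratic one_ne_zero
  have hPne : P ≠ 0 := fun h => by simp [h] at hPdeg
  have hdegle := minpoly.degree_le_of_ne_zero ℚ ζ hPne haeval
  have hmin : minpoly ℚ ζ = cyclotomic p ℚ := (cyclotomic_eq_minpoly_rat hprim hp.pos).symm
  rw [hmin, hPdeg] at hdegle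
  have hdc : (cyclotomic p ℚ).degree = (p.totient : ℕ) := degree_cyclotomic p ℚ
  rw [hdc, Nat.totient_prime hp] at hdegle
  have : ((p - 1 : ℕ) : WithBot ℕ) ≤ (2 : ℕ) := by exact_mod_cast hdegle
  have : p - 1 ≤ 2 := by exact_mod_cast this
  omega

/-- Complementarity: for a spherical triangle △p p_z p_x with sides
θ = d(p, p_z), θ′ = d(p, p_x), c = d(p_z, p_x), all in (0, π), cos c rational,
included angle γ = 2πn/p (p > 12 prime, 0 < n < p), satisfying the spherical cosine
rule cos θ′ = cos θ cos c + sin θ sin c cos γ: if cos θ is rational then cos θ′ is not. -/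
theorem complementarity (p : ℕ) (hp : p.Prime) (hp12 : 12 < p)
    (θ θ' c γ : ℝ) (hθ : 0 < θ ∧ θ < π) (hθ' : 0 < θ' ∧ θ' < π) (hc : 0 < c ∧ c < π)
    (n : ℤ) (hn0 : 0 < n) (hnp : n < (p : ℤ)) (hγ : γ = 2 * π * (n : ℝ) / (p : ℝ))
    (hqc : ∃ q : ℚ, Real.cos c = (q : ℝ))
    (hrule : Real.cos θ' = Real.cos θ * Real.cos c + Real.sin θ * Real.sin c * Real.cos γ)
    (hqθ : ∃ q : ℚ, Real.cos θ = (q : ℝ)) :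
    ¬ ∃ q : ℚ, Real.cos θ' = (q : ℝ) := by
  rintro ⟨q', hq'⟩
  obtain ⟨a, ha⟩ := hqθ
  obtain ⟨b, hb⟩ := hqc
  have hsθ : 0 < Real.sin θ := Real.sin_pos_of_pos_of_lt_pi hθ.1 hθ.2
  have hsc : 0 < Real.sin c := Real.sin_pos_of_pos_of_lt_pi hc.1 hc.2
  set r : ℚ := q' - a * b with hrdef
  have hr : Real.sin θ * Real.sin c * Real.cos γ = (r : ℝ) := by
    push_cast [hrdef]; rw [← hq', ← ha, ← hb]; linarith [hrule]
  set s : ℚ := (1 - a^2) * (1 - b^2) with hsdef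
  have hs : (Real.sin θ * Real.sin c)^2 = (s : ℝ) := by
    push_cast [hsdef]
    rw [← ha, ← hb, ← Real.sin_sq θ, ← Real.sin_sq c]
    ring
  have hspos : (0:ℝ) < (s:ℝ) := by rw [← hs]; positivity
  have hsne : (s:ℚ) ≠ 0 := by exact_mod_cast hspos.ne'
  have hsq : Real.cos γ ^ 2 = ((r^2 / s : ℚ) : ℝ) := by
    push_cast
    rw [eq_div_iff (by exact_mod_cast hsne)]
    rw [← hs]
    linear_combination (Real.sin θ * Real.sin c * Real.cos γ + (r:ℝ)) * hr
  have hcos2 : Real.cos (2 * γ) = ((2 * (r^2/s) - 1 : ℚ) : ℝ) := by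
    rw [Real.cos_two_mul, hsq]; push_cast; ring
  -- reduce 2γ modulo 2π
  have hpne : (p:ℝ) ≠ 0 := by positivity
  have hpz : (p:ℤ) ≠ 0 := by positivity
  set k : ℤ := (2*n) / (p:ℤ) with hk
  set m : ℤ := (2*n) % (p:ℤ) with hm
  have hdm : (p:ℤ) * k + m = 2*n := Int.mul_ediv_add_emod (2*n) p
  have hmnn : 0 ≤ m := Int.emod_nonneg _ hpz
  have hmlt : m < (p:ℤ) := Int.emod_lt_of_pos _ (by positivity)
  have hndvd : ¬ (p:ℤ) ∣ 2*n := by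
    intro h
    rcases (Int.Prime.dvd_mul' (by exact_mod_cast hp) h) with h2 | hn
    · have : (p:ℤ) ≤ 2 := Int.le_of_dvd (by norm_num) h2
      omega
    · have : (p:ℤ) ≤ n := Int.le_of_dvd hn0 hn
      omega
  have hmne : m ≠ 0 := by
    intro h0
    exact hndvd (Int.dvd_of_emod_eq_zero (by rw [← hm, h0]))
  have h2γ : 2*γ = 2*π*(m:ℝ)/(p:ℝ) + (k:ℝ) * (2*π) := by
    rw [hγ]
    field_simp
    have : ((2*n : ℤ) : ℝ) = (p:ℝ) * k + m := by exact_mod_cast hdm.symm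
    push_cast at this ⊢
    nlinarith [this, Real.pi_pos]
  have hcosm : Real.cos (2*π*(m:ℝ)/(p:ℝ)) = ((2 * (r^2/s) - 1 : ℚ) : ℝ) := by
    rw [← hcos2, h2γ, Real.cos_add_int_mul_two_pi]
  set m' : ℕ := m.toNat with hm'
  have hmm' : (m':ℝ) = (m:ℝ) := by
    have : ((m':ℕ):ℤ) = m := Int.toNat_of_nonneg hmnn
    exact_mod_cast this
  refine aux_irrat p hp (by omega) m' ?_ (2 * (r^2/s) - 1) (by rw [hmm']; exact hcosm)
  intro hdvd
  have h1 : (p:ℤ) ∣ m := by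
    have : ((p:ℕ):ℤ) ∣ ((m':ℕ):ℤ) := Int.natCast_dvd_natCast.mpr hdvd
    rwa [Int.toNat_of_nonneg hmnn] at this
  have := Int.le_of_dvd (lt_of_le_of_ne hmnn (Ne.symm hmne)) h1
  omega
end
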